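/- arXiv:1112.3874 — 3 statements merged into one kernel-verified Lean document; each statement's English description precedes it below -/
import Mathlib

section
/- Indeed, under the CIDS strategy with N iterations (N the number of cells), the only two possible outputs are Y = (0,0,…,0) and Y = (1,0,…,0). -/
open scoped BigOperators
open MeasureTheory ProbabilityTheory

namespace CI

/-- Strategies: sequences with values in {1,…,N}, encoded as `Fin N`. -/
abbrev Strat (N : ℕ) := ℕ → Fin N
/-- States of the system: boolean vectors of length N. -/
abbrev CState (N : ℕ) := Fin N → Bool
/-- The phase space 𝒳 = {1,…,N}^ℕ × 𝔹^N. -/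
abbrev Pt (N : ℕ) := Strat N × CState N

/-- d_e : sum of the discrete metric over the coordinates. -/
noncomputable def de {N : ℕ} (E F : CState N) : ℝ :=
  ∑ k : Fin N, if E k = F k then (0 : ℝ) else 1

/-- d_s(S,Š) = (9/N) Σ_{k≥1} |S^k − Š^k| / 10^k  (indices shifted to start at 0). -/
noncomputable def ds (N : ℕ) (S T : Strat N) : ℝ :=
  (9 / N) * ∑' k : ℕ, |((S k : ℝ)) - ((T k : ℝ))| / 10 ^ (k + 1)

/-- The distance d = d_e + d_s on 𝒳. -/
noncomputable def dC {N : ℕ} (p q : Pt N) : ℝ := de p.2 q.2 + ds N p.1 q.1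

/-- Flip bit k of the state E. -/
def bflip {N : ℕ} (k : Fin N) (E : CState N) : CState N :=
  fun j => if j = k then !(E j) else E j

/-- F_f(k,E): equal to E except possibly in coordinate k, where it is f(E)_k. -/
def Ff {N : ℕ} (f : CState N → CState N) (k : Fin N) (E : CState N) : CState N :=
  fun j => if j = k then f E k else E j

/-- The chaotic-iterations map G_f(S,E) = (σ(S), F_f(S^0,E)). -/
def Gf {N : ℕ} (f : CState N → CState N) (p : Pt N) : Pt N :=
  (fun n => p.1 (n + 1), Ff f (p.1 0) p.2)

/-- The vectorial negation f₀. -/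
def f0 {N : ℕ} (E : CState N) : CState N := fun j => !(E j)

/-- G_{f₀}. -/
def G0 {N : ℕ} : Pt N → Pt N := Gf f0

/-- Open ball for the distance dC. -/
def ballC {N : ℕ} (x : Pt N) (r : ℝ) : Set (Pt N) := {y | dC x y < r}

/-- Open sets of the metric space (𝒳,d). -/
def IsOpenC {N : ℕ} (U : Set (Pt N)) : Prop := ∀ x ∈ U, ∃ ε > 0, ballC x ε ⊆ U

/-- Iterating the flip-one-coordinate dynamics along a strategy. -/
def runCI {N : ℕ} (S : ℕ → Fin N) (E : CState N) : ℕ → CState N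
  | 0 => E
  | n + 1 => bflip (S n) (runCI S E n)

/-- The CIDS (cover-dependent) strategy: S^k = k if k ≤ N and X_k = 1, else S^k = 1
(indices encoded from 0, so "1" is `0 : Fin N`). -/
def cids {N : ℕ} [NeZero N] (X : CState N) : ℕ → Fin N :=
  fun k => if h : k < N then (if X ⟨k, h⟩ then ⟨k, h⟩ else 0) else 0


/-! A step of the run flips exactly the cell it names, so a cell's value changes only at the
steps that name it. Under `cids X`, a cell `j ≠ 0` is named at most once, at step `j`, and
precisely when `X j = true`; either way it ends at `false`. Only cell `0` remains free. -/

theorem runCI_succ_apply {N : ℕ} (S : ℕ → Fin N) (E : CState N) (n : ℕ) (j : Fin N) :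
    runCI S E (n + 1) j = if j = S n then !(runCI S E n j) else runCI S E n j :=
  rfl

theorem runCI_apply_of_forall_ne {N : ℕ} {S : ℕ → Fin N} {E : CState N} {j : Fin N}
    {m n : ℕ} (hmn : m ≤ n) (h : ∀ i, m ≤ i → i < n → S i ≠ j) :
    runCI S E n j = runCI S E m j := by
  induction n, hmn using Nat.le_induction with
  | base => rfl
  | succ n hmn ih =>
    rw [runCI_succ_apply, if_neg (h n hmn n.lt_succ_self).symm]
    exact ih fun i hmi hin => h i hmi (hin.trans n.lt_succ_self)

theorem cids_val {N : ℕ} [NeZero N] (X : CState N) (j : Fin N) :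
    cids X j = if X j then j else 0 := by
  simp [cids]

theorem cids_ne_of_ne {N : ℕ} [NeZero N] (X : CState N) {i : ℕ} {j : Fin N}
    (hj : j ≠ 0) (hij : i ≠ j) : cids X i ≠ j := by
  unfold cids
  split_ifs <;> first | exact hj.symm | exact fun h => hij (congrArg Fin.val h)

theorem runCI_cids_apply_of_ne_zero {N : ℕ} [NeZero N] (X : CState N) {j : Fin N}
    (hj : j ≠ 0) : runCI (cids X) X N j = false := by
  have after : runCI (cids X) X N j = runCI (cids X) X (j + 1) j :=
    runCI_apply_of_forall_ne j.isLt fun i hi _ => cids_ne_of_ne X hj (by omega)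
  have before : runCI (cids X) X j j = X j :=
    runCI_apply_of_forall_ne (Nat.zero_le _) fun i _ hi => cids_ne_of_ne X hj hi.ne
  rw [after, runCI_succ_apply, before, cids_val]
  cases X j <;> simp [hj]

theorem eq_false_or_eq_decide_eq_zero_of_forall_ne_zero {N : ℕ} [NeZero N] {E : CState N}
    (h : ∀ j, j ≠ 0 → E j = false) :
    E = (fun _ => false) ∨ E = (fun j => decide (j = (0 : Fin N))) := by
  cases h0 : E 0
  · left
    funext j
    by_cases hj : j = 0
    · rw [hj, h0]
    · exact h j hj
  · right
    funext j
    by_cases hj : j = 0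
    · simp [hj, h0]
    · simp [hj, h j hj]

theorem stmt3 {N : ℕ} [NeZero N] (X : CState N) :
    runCI (cids X) X N = (fun _ => false) ∨
    runCI (cids X) X N = (fun j => decide (j = (0 : Fin N))) :=
  eq_false_or_eq_decide_eq_zero_of_forall_ne_zero fun _ hj => runCI_cids_apply_of_ne_zero X hj

end CI
end

section
/- Let f₀ be the vectorial negation on 𝔹^N. The dynamical system G_{f₀} on (𝒳,d) is expansive with constant of expansivity 1: for all distinct points x ≠ y in 𝒳, there exists n ∈ ℕ with d(G_{f₀}^n(x), G_{f₀}^n(y)) ≥ 1. -/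
/-!
If two orbits stayed at distance less than 1 forever, their states would agree at every time,
since `d_e` counts differing bits. But `G_{f₀}` flips exactly the bit `S^n` at time `n`, so two
equal consecutive states determine `S^n`; hence the strategies would agree as well.
-/

open scoped BigOperators
open MeasureTheory ProbabilityTheory

namespace CI

lemma ds_nonneg {N : ℕ} (S T : Strat N) : 0 ≤ ds N S T :=
  mul_nonneg (by positivity) (tsum_nonneg fun _ => by positivity)

lemma one_le_de_of_ne {N : ℕ} {E F : CState N} (h : E ≠ F) : 1 ≤ de E F := by
  obtain ⟨k, hk⟩ := Function.ne_iff.mp h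
  calc (1 : ℝ) = if E k = F k then 0 else 1 := (if_neg hk).symm
    _ ≤ de E F := Finset.single_le_sum (f := fun j => if E j = F j then (0 : ℝ) else 1)
        (fun j _ => by split <;> norm_num) (Finset.mem_univ k)

lemma one_le_dC_of_snd_ne {N : ℕ} {p q : Pt N} (h : p.2 ≠ q.2) : 1 ≤ dC p q :=
  (one_le_de_of_ne h).trans (le_add_of_nonneg_right (ds_nonneg _ _))

lemma bflip_left_injective {N : ℕ} (E : CState N) : Function.Injective fun k => bflip k E := by
  intro k l h
  by_contra hkl
  have hk := congrFun h k
  simp only [bflip, if_neg hkl] at hk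
  exact Bool.not_ne_self (E k) hk

lemma Ff_f0 {N : ℕ} (k : Fin N) (E : CState N) : Ff f0 k E = bflip k E := by
  funext j
  by_cases hj : j = k <;> simp [Ff, f0, bflip, hj]

lemma G0_iterate_fst {N : ℕ} (x : Pt N) (n : ℕ) : (G0^[n] x).1 = fun m => x.1 (m + n) := by
  induction n with
  | zero => rfl
  | succ n ih =>
    rw [Function.iterate_succ_apply']
    change (fun m => (G0^[n] x).1 (m + 1)) = _
    simp only [ih, Nat.add_right_comm _ 1 n, Nat.add_assoc]

lemma G0_iterate_succ_snd {N : ℕ} (x : Pt N) (n : ℕ) :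
    (G0^[n + 1] x).2 = bflip (x.1 n) (G0^[n] x).2 := by
  rw [Function.iterate_succ_apply']
  change Ff f0 ((G0^[n] x).1 0) (G0^[n] x).2 = _
  simp only [Ff_f0, G0_iterate_fst, Nat.zero_add]

theorem stmt8_general {N : ℕ} :
    ∀ x y : Pt N, x ≠ y → ∃ n : ℕ, 1 ≤ dC (G0^[n] x) (G0^[n] y) := by
  intro x y hxy
  by_contra! hclose
  have hsnd : ∀ n, (G0^[n] x).2 = (G0^[n] y).2 := fun n => by
    by_contra hne
    exact (hclose n).not_ge (one_le_dC_of_snd_ne hne)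
  refine hxy (Prod.ext (funext fun n => bflip_left_injective (G0^[n] x).2 ?_) (hsnd 0))
  have h := hsnd (n + 1)
  rwa [G0_iterate_succ_snd, G0_iterate_succ_snd, ← hsnd n] at h

theorem stmt8 {N : ℕ} [NeZero N] :
    ∀ x y : Pt N, x ≠ y → ∃ n : ℕ, 1 ≤ dC (G0^[n] x) (G0^[n] y) :=
  stmt8_general

end CI
end

section
/- In the expansivity proof for G_{f₀}: if (S,E) and (Š,Ě) have E = Ě and S ≠ Š, and n₀ is the first index where S and Š differ, then G_{f₀}^k(S,E) and G_{f₀}^k(Š,Ě) have equal second components for all k ≤ n₀, while after one more iteration the states differ in exactly two coordinates, so d(G_{f₀}^{n₀+1}(S,E), G_{f₀}^{n₀+1}(Š,Ě)) ≥ 2. -/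
open scoped BigOperators
open MeasureTheory ProbabilityTheory

namespace CI

/-! Under `G0` the strategy is shifted and the state flips the bits `S 0, S 1, …` in turn, so
strategies agreeing before `n0` reach the same state at time `n0`, and the next step flips two
different bits of it. -/

lemma G0_apply {N : ℕ} (S : Strat N) (E : CState N) :
    G0 (S, E) = (fun n => S (n + 1), bflip (S 0) E) := by
  refine Prod.ext rfl (funext fun j => ?_)
  by_cases h : j = S 0 <;> simp [G0, Gf, Ff, f0, bflip, h]

lemma runCI_succ_eq_shift {N : ℕ} (S : Strat N) (E : CState N) (k : ℕ) :
    runCI S E (k + 1) = runCI (fun n => S (n + 1)) (bflip (S 0) E) k := by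
  induction k with
  | zero => rfl
  | succ k ih => rw [runCI, ih, runCI]

lemma G0_iterate {N : ℕ} (S : Strat N) (E : CState N) (k : ℕ) :
    G0^[k] (S, E) = (fun n => S (n + k), runCI S E k) := by
  induction k generalizing S E with
  | zero => rfl
  | succ k ih =>
    rw [Function.iterate_succ_apply, G0_apply, ih, runCI_succ_eq_shift]
    simp only [Nat.add_assoc]

lemma runCI_congr {N : ℕ} {S T : Strat N} (E : CState N) {n : ℕ}
    (h : ∀ k < n, S k = T k) : runCI S E n = runCI T E n := by
  induction n with
  | zero => rfl
  | succ n ih =>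
    rw [runCI, runCI, ih fun k hk => h k (Nat.lt_succ_of_lt hk), h n n.lt_succ_self]

lemma bflip_ne_bflip_iff {N : ℕ} {a b : Fin N} (hab : a ≠ b) (X : CState N) (j : Fin N) :
    bflip a X j ≠ bflip b X j ↔ j = a ∨ j = b := by
  by_cases hja : j = a
  · subst hja; simp [bflip, hab]
  · by_cases hjb : j = b
    · subst hjb; simp [bflip, hja]
    · simp [bflip, hja, hjb]

lemma hammingDist_bflip_bflip {N : ℕ} {a b : Fin N} (hab : a ≠ b) (X : CState N) :
    hammingDist (bflip a X) (bflip b X) = 2 := by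
  have hsupp : Finset.univ.filter (fun j => bflip a X j ≠ bflip b X j) = {a, b} := by
    ext j
    simp [bflip_ne_bflip_iff hab]
  rw [hammingDist, hsupp, Finset.card_pair hab]

lemma de_eq_hammingDist {N : ℕ} (E F : CState N) : de E F = hammingDist E F := by
  rw [de, hammingDist, Finset.card_filter]
  push_cast
  refine Finset.sum_congr rfl fun k _ => ?_
  split_ifs <;> simp_all

lemma hammingDist_le_dC {N : ℕ} (p q : Pt N) : (hammingDist p.2 q.2 : ℝ) ≤ dC p q := by
  rw [dC, ← de_eq_hammingDist]
  linarith [ds_nonneg p.1 q.1]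

theorem stmt9_general {N : ℕ} (S Sh : Strat N) (E : CState N) (n0 : ℕ)
    (hne : S n0 ≠ Sh n0) (hagree : ∀ k < n0, S k = Sh k) :
    (∀ k ≤ n0, (G0^[k] (S, E)).2 = (G0^[k] (Sh, E)).2) ∧
    hammingDist (G0^[n0 + 1] (S, E)).2 (G0^[n0 + 1] (Sh, E)).2 = 2 ∧
    2 ≤ dC (G0^[n0 + 1] (S, E)) (G0^[n0 + 1] (Sh, E)) := by
  have hstate : runCI S E n0 = runCI Sh E n0 := runCI_congr E hagree
  have hham : hammingDist (G0^[n0 + 1] (S, E)).2 (G0^[n0 + 1] (Sh, E)).2 = 2 := by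
    rw [G0_iterate, G0_iterate]
    simp only [runCI, hstate]
    exact hammingDist_bflip_bflip hne _
  refine ⟨fun k hk => ?_, hham, ?_⟩
  · rw [G0_iterate, G0_iterate]
    exact runCI_congr E fun j hj => hagree j (hj.trans_le hk)
  · have hle := hammingDist_le_dC (G0^[n0 + 1] (S, E)) (G0^[n0 + 1] (Sh, E))
    rwa [hham, Nat.cast_ofNat] at hle

theorem stmt9 {N : ℕ} [NeZero N] (S Sh : Strat N) (E : CState N) (n0 : ℕ)
    (hne : S n0 ≠ Sh n0) (hagree : ∀ k < n0, S k = Sh k) :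
    (∀ k ≤ n0, (G0^[k] (S, E)).2 = (G0^[k] (Sh, E)).2) ∧
    hammingDist (G0^[n0 + 1] (S, E)).2 (G0^[n0 + 1] (Sh, E)).2 = 2 ∧
    2 ≤ dC (G0^[n0 + 1] (S, E)) (G0^[n0 + 1] (Sh, E)) :=
  stmt9_general S Sh E n0 hne hagree

end CI
end
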